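/- Let k_i, k_j ≥ 1 and d ≥ 1 be integers. For k ≥ 1, let |Φ_k⟩ = (1/√k) Σ_{x=1}^{k} |x⟩⊗|x⟩ ∈ ℂ^k ⊗ ℂ^k (a unit vector) and let τ_k = (1/k) Σ_{x=1}^{k} |x⟩⟨x| ⊗ |x⟩⟨x| (a density matrix on ℂ^k ⊗ ℂ^k). Let ω be any density matrix on ℂ^d. Then D( τ_{k_i} ⊗ |Φ_{k_j}⟩⟨Φ_{k_j}| ⊗ ω , |Φ_{k_i}⟩⟨Φ_{k_i}| ⊗ τ_{k_j} ⊗ ω ) ≥ 1 − 1/max{k_i, k_j}. (This is the trace-distance lower bound, for the database owner's states after an honest user's query i versus query j, that breaks user privacy in the quantum private queries protocol of Giovannetti, Lloyd and Maccone.) -/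

import Mathlib

open scoped Matrix Kronecker BigOperators ComplexOrder

/-- The square root of a positive semidefinite matrix, as `Matrix.PosSemidef.sqrt` was defined
in the older Mathlib (removed since). -/
noncomputable def Matrix.PosSemidef.sqrt {n 𝕜 : Type*} [Fintype n] [DecidableEq n] [RCLike 𝕜]
    {A : Matrix n n 𝕜} (hA : A.PosSemidef) : Matrix n n 𝕜 :=
  hA.1.eigenvectorUnitary.1 * Matrix.diagonal ((↑) ∘ (√·) ∘ hA.1.eigenvalues) *
    (star hA.1.eigenvectorUnitary : Matrix n n 𝕜)

noncomputable def traceNorm {n : Type*} [Fintype n] [DecidableEq n]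
    (A : Matrix n n ℂ) : ℝ :=
  ((Matrix.posSemidef_conjTranspose_mul_self A).sqrt.trace).re

noncomputable def traceDist {n : Type*} [Fintype n] [DecidableEq n]
    (ρ σ : Matrix n n ℂ) : ℝ :=
  traceNorm (ρ - σ) / 2

def IsDensityMatrix {n : Type*} [Fintype n] (ρ : Matrix n n ℂ) : Prop :=
  ρ.PosSemidef ∧ ρ.trace = 1

/-- The maximally entangled pure state `|Φ_k⟩ = (1/√k) Σ_x |x⟩⊗|x⟩` on `ℂ^k ⊗ ℂ^k`. -/
noncomputable def maxEntVec (k : ℕ) : Fin k × Fin k → ℂ :=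
  fun p => if p.1 = p.2 then ((Real.sqrt k)⁻¹ : ℂ) else 0

/-- The rank-one density matrix `|Φ_k⟩⟨Φ_k|`. -/
noncomputable def maxEntState (k : ℕ) : Matrix (Fin k × Fin k) (Fin k × Fin k) ℂ :=
  Matrix.vecMulVec (maxEntVec k) (star (maxEntVec k))

/-- The classically correlated state `τ_k = (1/k) Σ_x |x⟩⟨x| ⊗ |x⟩⟨x|`. -/
noncomputable def classCorrState (k : ℕ) : Matrix (Fin k × Fin k) (Fin k × Fin k) ℂ :=
  (k : ℂ)⁻¹ • ∑ x : Fin k,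
    (Matrix.single x x (1 : ℂ) ⊗ₖ Matrix.single x x (1 : ℂ))

/-!
Helstrom's bound: for an orthogonal projection `P` and states `ρ, σ`, `P` captures at most the
positive part `(|ρ - σ| + (ρ - σ)) / 2` of `ρ - σ`, so `|tr P(ρ - σ)| ≤ D(ρ, σ)`. Take for `P` the
projection onto `|Φ_k⟩` on the register of size `k = max{k_i, k_j}` (identity elsewhere): it
accepts the state carrying `|Φ_k⟩⟨Φ_k|` there with certainty, and the one carrying `τ_k` with
probability `⟨Φ_k|τ_k|Φ_k⟩ = 1/k`.
-/

open Matrix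
open scoped MatrixOrder

section TraceNorm

variable {n : Type*} [Fintype n]

lemma Matrix.PosSemidef.sqrt_eq_cfcSqrt [DecidableEq n] {A : Matrix n n ℂ}
    (hA : A.PosSemidef) : hA.sqrt = CFC.sqrt A := by
  rw [CFC.sqrt_eq_real_sqrt A hA.nonneg, cfcₙ_eq_cfc, hA.1.cfc_eq]
  rfl

lemma traceNorm_eq_re_trace_abs [DecidableEq n] (A : Matrix n n ℂ) :
    traceNorm A = (CFC.abs A).trace.re := by
  rw [traceNorm, PosSemidef.sqrt_eq_cfcSqrt, CFC.abs, star_eq_conjTranspose]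

lemma IsStarProjection.trace_mul_nonneg {P A : Matrix n n ℂ} (hP : IsStarProjection P)
    (hA : 0 ≤ A) : 0 ≤ (P * A).trace := by
  have hPAP : 0 ≤ star P * A * P := star_left_conjugate_nonneg hA P
  rw [hP.isSelfAdjoint.star_eq] at hPAP
  rw [← hP.isIdempotentElem.eq, Matrix.mul_assoc, trace_mul_comm]
  exact hPAP.posSemidef.trace_nonneg

lemma IsStarProjection.trace_mul_le [DecidableEq n] {P A : Matrix n n ℂ}
    (hP : IsStarProjection P) (hA : 0 ≤ A) : (P * A).trace ≤ A.trace := by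
  have h := hP.one_sub.trace_mul_nonneg hA
  rwa [Matrix.sub_mul, Matrix.one_mul, trace_sub, sub_nonneg] at h

lemma IsStarProjection.re_trace_mul_le [DecidableEq n] {P Δ : Matrix n n ℂ}
    (hP : IsStarProjection P) (hΔ : IsSelfAdjoint Δ) :
    (P * Δ).trace.re ≤ (traceNorm Δ + Δ.trace.re) / 2 := by
  have hpos : (P * Δ⁺).trace.re ≤ (Δ⁺).trace.re :=
    Complex.re_le_re (hP.trace_mul_le (CFC.posPart_nonneg Δ))
  have hneg : 0 ≤ (P * Δ⁻).trace.re :=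
    Complex.re_le_re (hP.trace_mul_nonneg (CFC.negPart_nonneg Δ))
  have hsplit : (P * Δ).trace = (P * Δ⁺).trace - (P * Δ⁻).trace := by
    rw [← trace_sub, ← Matrix.mul_sub, CFC.posPart_sub_negPart Δ hΔ]
  have habs : (CFC.abs Δ).trace.re + Δ.trace.re = 2 * (Δ⁺).trace.re := by
    rw [← Complex.add_re, ← trace_add, CFC.abs_add_self Δ hΔ, trace_smul, two_nsmul,
      Complex.add_re, two_mul]
  rw [traceNorm_eq_re_trace_abs, hsplit, Complex.sub_re]
  linarith

lemma IsStarProjection.abs_re_trace_mul_sub_le_traceDist [DecidableEq n] {P ρ σ : Matrix n n ℂ}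
    (hP : IsStarProjection P) (hρ : IsSelfAdjoint ρ) (hσ : IsSelfAdjoint σ)
    (htr : ρ.trace = σ.trace) : |(P * (ρ - σ)).trace.re| ≤ traceDist ρ σ := by
  have hΔ : IsSelfAdjoint (ρ - σ) := hρ.sub hσ
  have htr0 : (ρ - σ).trace.re = 0 := by rw [trace_sub, htr, sub_self, Complex.zero_re]
  have hup := hP.re_trace_mul_le hΔ
  have hlow := hP.re_trace_mul_le hΔ.neg
  rw [htr0] at hup
  rw [traceNorm_eq_re_trace_abs, CFC.abs_neg, ← traceNorm_eq_re_trace_abs, Matrix.mul_neg,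
    trace_neg, trace_neg, Complex.neg_re, Complex.neg_re, htr0] at hlow
  rw [traceDist, abs_le]
  constructor <;> linarith

end TraceNorm

section Kronecker

variable {R m n : Type*} [CommSemiring R] [StarRing R]

lemma IsSelfAdjoint.kronecker {A : Matrix m m R} {B : Matrix n n R} (hA : IsSelfAdjoint A)
    (hB : IsSelfAdjoint B) : IsSelfAdjoint (A ⊗ₖ B) := by
  rw [IsSelfAdjoint, star_eq_conjTranspose, conjTranspose_kronecker, ← star_eq_conjTranspose,
    ← star_eq_conjTranspose, hA.star_eq, hB.star_eq]

lemma IsStarProjection.kronecker [Fintype m] [Fintype n] {A : Matrix m m R} {B : Matrix n n R}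
    (hA : IsStarProjection A) (hB : IsStarProjection B) : IsStarProjection (A ⊗ₖ B) where
  isIdempotentElem := by
    rw [IsIdempotentElem, ← mul_kronecker_mul, hA.isIdempotentElem.eq, hB.isIdempotentElem.eq]
  isSelfAdjoint := hA.isSelfAdjoint.kronecker hB.isSelfAdjoint

end Kronecker

section States

variable (k : ℕ)

lemma sum_ite_fst_eq_snd (c : ℂ) :
    ∑ p : Fin k × Fin k, (if p.1 = p.2 then c else 0) = k * c := by
  simp [Fintype.sum_prod_type]

lemma maxEntVec_mul_self (p : Fin k × Fin k) :
    maxEntVec k p * maxEntVec k p = if p.1 = p.2 then (k : ℂ)⁻¹ else 0 := by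
  unfold maxEntVec
  split_ifs
  · rw [← mul_inv, ← Complex.ofReal_mul, Real.mul_self_sqrt k.cast_nonneg, Complex.ofReal_natCast]
  · rw [mul_zero]

lemma star_maxEntVec : star (maxEntVec k) = maxEntVec k := by
  ext p
  by_cases h : p.1 = p.2 <;> simp [maxEntVec, h]

lemma classCorrState_eq_diagonal :
    classCorrState k = diagonal fun p => if p.1 = p.2 then (k : ℂ)⁻¹ else 0 := by
  ext ⟨a, b⟩ ⟨c, d⟩
  simp only [classCorrState, Matrix.smul_apply, Matrix.sum_apply, kroneckerMap_apply,
    single_apply, diagonal_apply, smul_eq_mul]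
  rw [Finset.sum_eq_single a (fun x _ hx => by simp [hx]) (by simp)]
  by_cases hab : a = b <;> by_cases hac : a = c <;> by_cases hbd : b = d <;> simp_all

lemma isSelfAdjoint_classCorrState : IsSelfAdjoint (classCorrState k) := by
  rw [classCorrState_eq_diagonal, IsSelfAdjoint, star_eq_conjTranspose, diagonal_conjTranspose]
  congr 1
  ext p
  by_cases h : p.1 = p.2 <;> simp [h]

lemma trace_maxEntState_mul_classCorrState :
    (maxEntState k * classCorrState k).trace = ((k⁻¹ : ℝ) : ℂ) := by
  simp only [trace, diag, classCorrState_eq_diagonal, mul_diagonal, maxEntState, vecMulVec_apply,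
    star_maxEntVec, maxEntVec_mul_self, ite_zero_mul_ite_zero, and_self, sum_ite_fst_eq_snd]
  push_cast
  rcases eq_or_ne (k : ℂ) 0 with hk | hk
  · simp [hk]
  · rw [mul_inv_cancel_left₀ hk]

variable {k}

lemma maxEntVec_dotProduct_self (hk : k ≠ 0) : maxEntVec k ⬝ᵥ maxEntVec k = 1 := by
  simp_rw [dotProduct, maxEntVec_mul_self, sum_ite_fst_eq_snd]
  exact mul_inv_cancel₀ (Nat.cast_ne_zero.mpr hk)

lemma isStarProjection_maxEntState (hk : k ≠ 0) : IsStarProjection (maxEntState k) where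
  isIdempotentElem := by
    rw [IsIdempotentElem, maxEntState, star_maxEntVec, vecMulVec_mul_vecMulVec,
      maxEntVec_dotProduct_self hk, one_smul]
  isSelfAdjoint := by
    rw [IsSelfAdjoint, maxEntState, star_eq_conjTranspose, conjTranspose_vecMulVec, star_star]

lemma trace_maxEntState (hk : k ≠ 0) : (maxEntState k).trace = 1 := by
  rw [maxEntState, trace_vecMulVec, star_maxEntVec, maxEntVec_dotProduct_self hk]

lemma trace_classCorrState (hk : k ≠ 0) : (classCorrState k).trace = 1 := by
  rw [classCorrState_eq_diagonal, trace_diagonal, sum_ite_fst_eq_snd]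
  exact mul_inv_cancel₀ (Nat.cast_ne_zero.mpr hk)

end States

theorem trace_dist_attack_glm_general
    (ki kj d : ℕ) (hki : 1 ≤ ki) (hkj : 1 ≤ kj)
    (ω : Matrix (Fin d) (Fin d) ℂ) (hω : IsDensityMatrix ω) :
    1 - 1 / (max ki kj : ℝ) ≤
      traceDist
        ((classCorrState ki ⊗ₖ maxEntState kj) ⊗ₖ ω)
        ((maxEntState ki ⊗ₖ classCorrState kj) ⊗ₖ ω) := by
  have hki0 : ki ≠ 0 := by omega
  have hkj0 : kj ≠ 0 := by omega
  have hΦi := isStarProjection_maxEntState hki0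
  have hΦj := isStarProjection_maxEntState hkj0
  have hρ := ((isSelfAdjoint_classCorrState ki).kronecker hΦj.isSelfAdjoint).kronecker hω.1.1
  have hσ := (hΦi.isSelfAdjoint.kronecker (isSelfAdjoint_classCorrState kj)).kronecker hω.1.1
  have htr : ((classCorrState ki ⊗ₖ maxEntState kj) ⊗ₖ ω).trace =
      ((maxEntState ki ⊗ₖ classCorrState kj) ⊗ₖ ω).trace := by
    simp only [trace_kronecker, trace_classCorrState, trace_maxEntState, hki0, hkj0,
      ne_eq, not_false_eq_true]
  have h1 := IsStarProjection.one (Matrix (Fin d) (Fin d) ℂ)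
  rcases le_total ki kj with h | h
  · have hP := ((IsStarProjection.one (Matrix (Fin ki × Fin ki) _ ℂ)).kronecker hΦj).kronecker h1
    have hbound := hP.abs_re_trace_mul_sub_le_traceDist hρ hσ htr
    simp only [Matrix.mul_sub, ← mul_kronecker_mul, one_mul, hΦj.isIdempotentElem.eq, trace_sub,
      trace_kronecker, trace_classCorrState hki0, trace_maxEntState hkj0, trace_maxEntState hki0,
      trace_maxEntState_mul_classCorrState, hω.2, mul_one, Complex.sub_re, Complex.one_re,
      Complex.ofReal_re] at hbound
    rw [max_eq_right (Nat.cast_le.mpr h), one_div]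
    exact (le_abs_self _).trans hbound
  · have hP := (hΦi.kronecker (IsStarProjection.one (Matrix (Fin kj × Fin kj) _ ℂ))).kronecker h1
    have hbound := hP.abs_re_trace_mul_sub_le_traceDist hρ hσ htr
    simp only [Matrix.mul_sub, ← mul_kronecker_mul, one_mul, hΦi.isIdempotentElem.eq, trace_sub,
      trace_kronecker, trace_classCorrState hkj0, trace_maxEntState hki0, trace_maxEntState hkj0,
      trace_maxEntState_mul_classCorrState, hω.2, mul_one, Complex.sub_re, Complex.one_re,
      Complex.ofReal_re, abs_sub_comm _ (1 : ℝ)] at hbound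
    rw [max_eq_left (Nat.cast_le.mpr h), one_div]
    exact (le_abs_self _).trans hbound

/-- the trace-distance lower bound between the database owner's
states after an honest user's query `i` versus query `j` in the protocol of
Giovannetti, Lloyd and Maccone. -/
theorem trace_dist_attack_glm
    (ki kj d : ℕ) (hki : 1 ≤ ki) (hkj : 1 ≤ kj) (hd : 1 ≤ d)
    (ω : Matrix (Fin d) (Fin d) ℂ) (hω : IsDensityMatrix ω) :
    1 - 1 / (max ki kj : ℝ) ≤
      traceDist
        ((classCorrState ki ⊗ₖ maxEntState kj) ⊗ₖ ω)
        ((maxEntState ki ⊗ₖ classCorrState kj) ⊗ₖ ω) :=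
  trace_dist_attack_glm_general ki kj d hki hkj ω hω
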